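/- If (μ₁,…,μ_N) is a step C-compatible tuple, then r₁+⋯+r_N ≥ C + (r_k − l_k) for all k; moreover, if equality holds for some index m, then μ_k = λ[l_k,r_k] for all k and r_m − l_m = Σ_{i≠m}(r_i − l_i). -/

import Mathlib

open MeasureTheory

/-- `μ ∈ D[l,r]`: `μ = α·δ_l + ρ(x)dx` where `ρ` is nonnegative, nonincreasing on `[l,r]`
and vanishes outside `[l,r]` (the absolutely continuous part has total mass `1 − α`). -/
def memD (l r : ℝ) (μ : Measure ℝ) : Prop :=
  ∃ α : ℝ, 0 ≤ α ∧ α ≤ 1 ∧ ∃ ρ : ℝ → ℝ,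
    (∀ x, 0 ≤ ρ x) ∧ AntitoneOn ρ (Set.Icc l r) ∧ (∀ x ∉ Set.Icc l r, ρ x = 0) ∧
    μ = (ENNReal.ofReal α) • Measure.dirac l
          + volume.withDensity (fun x => ENNReal.ofReal (ρ x))

/-- `μ ∈ D_AC[l,r]`: `μ = ρ(x)dx` with `ρ` nonnegative, nonincreasing on `[l,r]`, vanishing
outside `[l,r]`. -/
def memDAC (l r : ℝ) (μ : Measure ℝ) : Prop :=
  ∃ ρ : ℝ → ℝ,
    (∀ x, 0 ≤ ρ x) ∧ AntitoneOn ρ (Set.Icc l r) ∧ (∀ x ∉ Set.Icc l r, ρ x = 0) ∧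
    μ = volume.withDensity (fun x => ENNReal.ofReal (ρ x))

/-- `λ[l,t]`: normalized Lebesgue measure on `[l,t]` for `l < t`, and `δ_l` for `t = l`. -/
noncomputable def lam (l t : ℝ) : Measure ℝ :=
  if l < t then (ENNReal.ofReal (t - l))⁻¹ • volume.restrict (Set.Icc l t)
  else Measure.dirac l

/-- A pair of N-tuples (l, r) is a C-compatible boundary if 0 ≤ r_k − l_k ≤ C − Σᵢ lᵢ. -/
def CompatBoundary {N : ℕ} (C : ℝ) (l r : Fin N → ℝ) : Prop :=
  ∀ k, 0 ≤ r k - l k ∧ r k - l k ≤ C - ∑ i, l i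

/-- The tuple μ belongs to V^N[C]: Σ 𝔼(μ_k) = C and μ_k ∈ D[l_k,r_k] for some C-compatible
boundary (l,r). -/
def memV {N : ℕ} (C : ℝ) (μ : Fin N → MeasureTheory.Measure ℝ) : Prop :=
  (∑ k, ∫ x, x ∂(μ k)) = C ∧
  ∃ l r : Fin N → ℝ, CompatBoundary C l r ∧ ∀ k, memD (l k) (r k) (μ k)


open MeasureTheory

/-
Mixing `λ[l,p]` with weight `α` and `λ[l,r]` with weight `1 − α` gives the mean
`l + (r − l)/2 − α(r − p)/2`. Summing over `k` and using `Σ 𝔼(μ_k) = C` yields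
`Σ r_i = 2C − Σ l_i + Σ α_i (r_i − p_i)`, while compatibility gives `r_k − l_k ≤ C − Σ l_i`;
together `C + (r_k − l_k) ≤ 2C − Σ l_i ≤ Σ r_i`. Equality forces every `α_i (r_i − p_i)` to vanish,
i.e. `p_i = r_i`, so that `μ_i = λ[l_i,r_i]`, and `r_m − l_m = C − Σ l_i = ½ Σ (r_i − l_i)`.
-/

lemma integrable_id_lam (l t : ℝ) : Integrable (fun x : ℝ => x) (lam l t) := by
  unfold lam
  split_ifs with h
  · exact continuous_id.integrableOn_Icc.integrable.smul_measure
      (ENNReal.inv_ne_top.2 (ENNReal.ofReal_pos.2 (sub_pos.2 h)).ne')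
  · exact (integrable_const l).congr (ae_eq_dirac (fun x : ℝ => x)).symm

lemma integral_id_lam {l t : ℝ} (h : l ≤ t) : ∫ x, x ∂(lam l t) = (l + t) / 2 := by
  unfold lam
  split_ifs with hlt
  · rw [integral_smul_measure, integral_Icc_eq_integral_Ioc,
      ← intervalIntegral.integral_of_le hlt.le, integral_id,
      ENNReal.toReal_inv, ENNReal.toReal_ofReal (sub_nonneg.2 h)]
    have h0 : t - l ≠ 0 := sub_ne_zero.2 hlt.ne'
    rw [smul_eq_mul, inv_mul_eq_div, div_eq_iff h0]
    ring
  · obtain rfl : t = l := le_antisymm (not_lt.mp hlt) h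
    rw [integral_dirac]
    ring

lemma integral_id_ofReal_smul_lam_add {l p r a : ℝ} (ha₀ : 0 ≤ a) (ha₁ : a ≤ 1)
    (hlp : l ≤ p) (hlr : l ≤ r) :
    ∫ x, x ∂(ENNReal.ofReal a • lam l p + ENNReal.ofReal (1 - a) • lam l r)
      = l + (r - l) / 2 - a * (r - p) / 2 := by
  rw [integral_add_measure
      ((integrable_id_lam l p).smul_measure ENNReal.ofReal_ne_top)
      ((integrable_id_lam l r).smul_measure ENNReal.ofReal_ne_top),
    integral_smul_measure, integral_smul_measure,
    ENNReal.toReal_ofReal ha₀, ENNReal.toReal_ofReal (sub_nonneg.2 ha₁),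
    integral_id_lam hlp, integral_id_lam hlr, smul_eq_mul, smul_eq_mul]
  ring

lemma ofReal_smul_add_ofReal_one_sub_smul {X : Type*} [MeasurableSpace X] {a : ℝ}
    (ha₀ : 0 ≤ a) (ha₁ : a ≤ 1) (ν : Measure X) : ENNReal.ofReal a • ν + ENNReal.ofReal (1 - a) • ν = ν := by
  rw [← add_smul, ← ENNReal.ofReal_add ha₀ (sub_nonneg.2 ha₁), add_sub_cancel,
    ENNReal.ofReal_one, one_smul]

/-- a step C-compatible tuple satisfies Σ r_i ≥ C + (r_k − l_k) for all k; if
equality holds for some m then μ_k = λ[l_k,r_k] for all k and r_m − l_m = Σ_{i≠m}(r_i−l_i). -/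
theorem stmt14 {N : ℕ} (C : ℝ) (l r p α : Fin N → ℝ) (μ : Fin N → Measure ℝ)
    (hb : CompatBoundary C l r)
    (hp : ∀ k, l k ≤ p k ∧ p k ≤ r k) (hα : ∀ k, 0 < α k ∧ α k < 1)
    (hμ : ∀ k, μ k = ENNReal.ofReal (α k) • lam (l k) (p k)
                    + ENNReal.ofReal (1 - α k) • lam (l k) (r k))
    (hE : (∑ k, ∫ x, x ∂(μ k)) = C) :
    (∀ k, C + (r k - l k) ≤ ∑ i, r i) ∧
      (∀ m, (∑ i, r i) = C + (r m - l m) →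
        (∀ k, μ k = lam (l k) (r k)) ∧
          r m - l m = ∑ i ∈ Finset.univ.erase m, (r i - l i)) := by
  have hmean (k : Fin N) : ∫ x, x ∂(μ k) = l k + (r k - l k) / 2 - α k * (r k - p k) / 2 := by
    rw [hμ k]
    exact integral_id_ofReal_smul_lam_add (hα k).1.le (hα k).2.le (hp k).1
      ((hp k).1.trans (hp k).2)
  have hsum : ∑ i, r i = 2 * C - ∑ i, l i + ∑ i, α i * (r i - p i) := by
    simp only [← hE, hmean, Finset.sum_sub_distrib, Finset.sum_add_distrib, ← Finset.sum_div]
    ring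
  have hdefect (k : Fin N) : 0 ≤ α k * (r k - p k) :=
    mul_nonneg (hα k).1.le (sub_nonneg.2 (hp k).2)
  have hdefect_sum : 0 ≤ ∑ i, α i * (r i - p i) := Finset.sum_nonneg fun i _ => hdefect i
  refine ⟨fun k => by linarith [(hb k).2], fun m hm => ⟨fun k => ?_, ?_⟩⟩
  · have hzero : α k * (r k - p k) = 0 :=
      (Finset.sum_eq_zero_iff_of_nonneg fun i _ => hdefect i).1
        (by linarith [(hb m).2]) k (Finset.mem_univ k)
    have hpr : p k = r k := by
      linarith [(mul_eq_zero.1 hzero).resolve_left (hα k).1.ne']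
    rw [hμ k, hpr, ofReal_smul_add_ofReal_one_sub_smul (hα k).1.le (hα k).2.le]
  · rw [Finset.sum_erase_eq_sub (Finset.mem_univ m), Finset.sum_sub_distrib]
    linarith [(hb m).2]
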